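/- arXiv:2007.00414 — 2 statements merged into one kernel-verified Lean document; each statement's English description precedes it below -/
import Mathlib

section
/- Let m = 2^α with α ≥ 3, and let A, B ⊆ ℤ/mℤ with A ∪ B = ℤ/mℤ and A ∩ B = {r₁, r₂}, where r₂ − r₁ is odd. Then there exists n ∈ ℤ/mℤ with R_A(n) ≠ R_B(n). -/
/-- Number of unordered pairs (a, a') from A (possibly equal) with a + a' = n. -/
def Rf {m : ℕ} (A : Finset (ZMod m)) (n : ZMod m) : ℕ :=
  ((A ×ˢ A).filter (fun p => p.1 + p.2 = n ∧ p.1.val ≤ p.2.val)).card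

/-- Number of ordered pairs (c, d) ∈ C × D with c + d = n. -/
def Rord {m : ℕ} (C D : Finset (ZMod m)) (n : ZMod m) : ℕ :=
  ((C ×ˢ D).filter (fun p => p.1 + p.2 = n)).card

/-- Characteristic function of A applied to the residue class of an integer. -/
def chi {m : ℕ} (A : Finset (ZMod m)) (k : ℤ) : ℤ :=
  if (k : ZMod m) ∈ A then 1 else 0

open Finset

private lemma sum4 {M : Type*} [AddCommMonoid M] (g : ZMod 4 → M) :
    ∑ c : ZMod 4, g c = g 0 + g 1 + g 2 + g 3 := by
  have h : (Finset.univ : Finset (ZMod 4)) = {0, 1, 2, 3} := by decide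
  rw [h]
  rw [show ({0,1,2,3} : Finset (ZMod 4)) = insert 0 (insert 1 (insert 2 {3})) from rfl]
  rw [Finset.sum_insert (by decide), Finset.sum_insert (by decide),
    Finset.sum_insert (by decide), Finset.sum_singleton]
  simp [add_assoc]

private lemma lemF {m : ℕ} [NeZero m] (C : Finset (ZMod m)) (g : ZMod m → ZMod 4) (σ : ZMod 4) :
    ((C ×ˢ C).filter (fun p => g (p.1 + p.2) = σ ∧ p.1.val ≤ p.2.val)).card
      = ∑ n ∈ univ.filter (fun n => g n = σ), Rf C n := by
  rw [Finset.card_eq_sum_card_fiberwise (f := fun p => p.1 + p.2)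
      (t := univ.filter (fun n => g n = σ))
      (fun p hp => by simp only [mem_coe, mem_filter, mem_univ, true_and] at hp ⊢; exact hp.2.1)]
  refine Finset.sum_congr rfl (fun n hn => ?_)
  simp only [mem_filter, mem_univ, true_and] at hn
  unfold Rf
  congr 1
  ext p
  simp only [mem_filter, mem_product]
  constructor
  · rintro ⟨⟨⟨hp1, hp2⟩, _, hv⟩, he⟩
    exact ⟨⟨hp1, hp2⟩, he, hv⟩
  · rintro ⟨⟨hp1, hp2⟩, he, hv⟩
    exact ⟨⟨⟨hp1, hp2⟩, by rw [he]; exact hn, hv⟩, he⟩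

private lemma lemPD {m : ℕ} [NeZero m] (C : Finset (ZMod m)) (g : ZMod m → ZMod 4) (σ : ZMod 4) :
    2 * ((C ×ˢ C).filter (fun p => g (p.1 + p.2) = σ ∧ p.1.val ≤ p.2.val)).card
      = ((C ×ˢ C).filter (fun p => g (p.1 + p.2) = σ)).card
        + (C.filter (fun x => g (x + x) = σ)).card := by
  set s := (C ×ˢ C).filter (fun p => g (p.1 + p.2) = σ) with hs
  have hmem : ∀ p : ZMod m × ZMod m, p ∈ s ↔ p.1 ∈ C ∧ p.2 ∈ C ∧ g (p.1 + p.2) = σ := by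
    intro p; simp [hs, mem_filter, mem_product, and_assoc]
  have h1 : (C ×ˢ C).filter (fun p => g (p.1 + p.2) = σ ∧ p.1.val ≤ p.2.val)
      = s.filter (fun p => p.1.val ≤ p.2.val) := by
    rw [hs, filter_filter]
  have hswap : (s.filter (fun p => p.1.val ≤ p.2.val)).card
      = (s.filter (fun p => p.2.val ≤ p.1.val)).card := by
    refine Finset.card_bij' (fun p _ => Prod.swap p) (fun p _ => Prod.swap p) ?_ ?_
      (fun _ _ => rfl) (fun _ _ => rfl)
    · intro p hp
      simp only [mem_filter] at hp ⊢
      rw [hmem] at hp ⊢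
      obtain ⟨⟨c1, c2, hσ⟩, hv⟩ := hp
      exact ⟨⟨c2, c1, by rwa [add_comm] at hσ⟩, hv⟩
    · intro p hp
      simp only [mem_filter] at hp ⊢
      rw [hmem] at hp ⊢
      obtain ⟨⟨c1, c2, hσ⟩, hv⟩ := hp
      exact ⟨⟨c2, c1, by rwa [add_comm] at hσ⟩, hv⟩
  have hcup : s.filter (fun p => p.1.val ≤ p.2.val) ∪ s.filter (fun p => p.2.val ≤ p.1.val) = s := by
    rw [← filter_or]
    exact filter_true_of_mem (fun p _ => Nat.le_total p.1.val p.2.val)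
  have hcap : s.filter (fun p => p.1.val ≤ p.2.val) ∩ s.filter (fun p => p.2.val ≤ p.1.val)
      = s.filter (fun p => p.1 = p.2) := by
    rw [← filter_and]
    apply filter_congr
    intro p _
    constructor
    · rintro ⟨hle, hge⟩
      exact ZMod.val_injective m (Nat.le_antisymm hle hge)
    · intro h; rw [h]; exact ⟨le_rfl, le_rfl⟩
  have hdiag : (s.filter (fun p => p.1 = p.2)).card = (C.filter (fun x => g (x + x) = σ)).card := by
    refine Finset.card_bij' (fun p _ => p.1) (fun x _ => (x, x)) ?_ ?_ ?_ (fun _ _ => rfl)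
    · intro p hp
      rw [mem_filter] at hp
      obtain ⟨hps, he⟩ := hp
      rw [hmem] at hps
      rw [mem_filter]
      exact ⟨hps.1, by rw [← he] at hps; exact hps.2.2⟩
    · intro x hx
      rw [mem_filter] at hx
      rw [mem_filter, hmem]
      exact ⟨⟨hx.1, hx.1, hx.2⟩, rfl⟩
    · intro p hp
      rw [mem_filter] at hp
      obtain ⟨p1, p2⟩ := p
      obtain ⟨-, h⟩ := hp
      cases h
      rfl
  have hkey := Finset.card_union_add_card_inter
    (s.filter (fun p => p.1.val ≤ p.2.val)) (s.filter (fun p => p.2.val ≤ p.1.val))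
  rw [hcup, hcap, hdiag] at hkey
  rw [h1]
  omega

private lemma lemP {m : ℕ} [NeZero m] (C : Finset (ZMod m)) (g : ZMod m →+* ZMod 4) (σ : ZMod 4) :
    ((C ×ˢ C).filter (fun p => g (p.1 + p.2) = σ)).card
      = ∑ c : ZMod 4, (C.filter (fun x => g x = c)).card * (C.filter (fun x => g x = σ - c)).card := by
  rw [Finset.card_eq_sum_card_fiberwise (f := fun p => g p.1) (t := univ) (fun _ _ => mem_univ _)]
  refine Finset.sum_congr rfl (fun c _ => ?_)
  rw [filter_filter]
  have heq : (C ×ˢ C).filter (fun p => g (p.1 + p.2) = σ ∧ g p.1 = c)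
      = (C.filter (fun x => g x = c)) ×ˢ (C.filter (fun x => g x = σ - c)) := by
    ext p
    simp only [mem_filter, mem_product]
    constructor
    · rintro ⟨⟨h1, h2⟩, hσ, hc⟩
      rw [map_add, hc] at hσ
      exact ⟨⟨h1, hc⟩, h2, eq_sub_of_add_eq' hσ⟩
    · rintro ⟨⟨h1, hc⟩, h2, hsc⟩
      refine ⟨⟨h1, h2⟩, ?_, hc⟩
      rw [map_add, hc, hsc]; ring
  rw [heq, card_product]

private lemma lemD {m : ℕ} [NeZero m] (C : Finset (ZMod m)) (g : ZMod m →+* ZMod 4) (σ : ZMod 4) :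
    (C.filter (fun x => g (x + x) = σ)).card
      = ∑ c : ZMod 4, if c + c = σ then (C.filter (fun x => g x = c)).card else 0 := by
  rw [Finset.card_eq_sum_card_fiberwise (f := fun x => g x) (t := univ) (fun _ _ => mem_univ _)]
  refine Finset.sum_congr rfl (fun c _ => ?_)
  rw [filter_filter]
  by_cases h : c + c = σ
  · rw [if_pos h]
    congr 1
    apply filter_congr
    intro x _
    constructor
    · rintro ⟨_, h2⟩; exact h2
    · intro h2
      exact ⟨by rw [map_add, h2, h], h2⟩
  · rw [if_neg h]
    rw [Finset.card_eq_zero, Finset.filter_eq_empty_iff]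
    rintro x _ ⟨h1, h2⟩
    exact h (by rw [← h1, map_add, h2])

theorem stmt13 (α : ℕ) (hα : 3 ≤ α) (m : ℕ) (hm : m = 2 ^ α) [NeZero m]
    (A B : Finset (ZMod m)) (hU : A ∪ B = Finset.univ) (r₁ r₂ : ℤ)
    (hI : A ∩ B = {(r₁ : ZMod m), (r₂ : ZMod m)})
    (hodd : Odd (r₂ - r₁)) :
    ∃ n : ZMod m, Rf A n ≠ Rf B n := by
  by_contra hcon
  push_neg at hcon
  have h8m : (8 : ℕ) ∣ m := by
    rw [hm, show (8:ℕ) = 2^3 by norm_num]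
    exact pow_dvd_pow 2 hα
  have h4m : (4 : ℕ) ∣ m := dvd_trans (by norm_num) h8m
  set f : ZMod m →+* ZMod 4 := ZMod.castHom h4m (ZMod 4) with hfdef
  -- the two intersection points
  have hne : (r₁ : ZMod m) ≠ (r₂ : ZMod m) := by
    intro h
    have h0 : ((r₂ - r₁ : ℤ) : ZMod m) = 0 := by push_cast; rw [← h]; ring
    rw [ZMod.intCast_zmod_eq_zero_iff_dvd] at h0
    have h2m : (2 : ℤ) ∣ (m : ℤ) := by
      exact_mod_cast Int.natCast_dvd_natCast.mpr (dvd_trans (by norm_num) h4m)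
    have h2 : (2 : ℤ) ∣ (r₂ - r₁) := dvd_trans h2m h0
    obtain ⟨j, hj⟩ := hodd
    omega
  -- fiber sizes
  obtain ⟨N, hN⟩ : ∃ k, ((univ : Finset (ZMod m)).filter (fun x => f x = (0 : ZMod 4))).card = k :=
    ⟨_, rfl⟩
  have hfib : ∀ c : ZMod 4, ((univ : Finset (ZMod m)).filter (fun x => f x = c)).card = N := by
    intro c
    obtain ⟨e, he⟩ : ∃ e : ZMod m, f e = c :=
      ⟨((c.val : ℕ) : ZMod m), by rw [map_natCast]; exact ZMod.natCast_rightInverse c⟩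
    rw [← hN]
    refine Finset.card_nbij' (fun x => x - e) (fun x => x + e) ?_ ?_
      (fun x _ => by ring) (fun x _ => by ring)
    · intro x hx
      simp only [mem_coe, mem_filter, mem_univ, true_and] at hx ⊢
      rw [map_sub, hx, he]; ring
    · intro x hx
      simp only [mem_coe, mem_filter, mem_univ, true_and] at hx ⊢
      rw [map_add, hx, he]; ring
  have h4N : 4 * N = m := by
    have hpart := Finset.card_eq_sum_card_fiberwise
      (s := (univ : Finset (ZMod m))) (t := (univ : Finset (ZMod 4)))
      (f := fun x => f x) (fun x _ => mem_univ _)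
    rw [Finset.card_univ, ZMod.card] at hpart
    rw [sum4 (g := fun c => ((univ : Finset (ZMod m)).filter (fun x => f x = c)).card)] at hpart
    rw [hfib 0, hfib 1, hfib 2, hfib 3] at hpart
    omega
  -- class counts
  obtain ⟨a0, hA0⟩ : ∃ k, (A.filter (fun x => f x = (0:ZMod 4))).card = k := ⟨_, rfl⟩
  obtain ⟨a1, hA1⟩ : ∃ k, (A.filter (fun x => f x = (1:ZMod 4))).card = k := ⟨_, rfl⟩
  obtain ⟨a2, hA2⟩ : ∃ k, (A.filter (fun x => f x = (2:ZMod 4))).card = k := ⟨_, rfl⟩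
  obtain ⟨a3, hA3⟩ : ∃ k, (A.filter (fun x => f x = (3:ZMod 4))).card = k := ⟨_, rfl⟩
  obtain ⟨b0, hB0⟩ : ∃ k, (B.filter (fun x => f x = (0:ZMod 4))).card = k := ⟨_, rfl⟩
  obtain ⟨b1, hB1⟩ : ∃ k, (B.filter (fun x => f x = (1:ZMod 4))).card = k := ⟨_, rfl⟩
  obtain ⟨b2, hB2⟩ : ∃ k, (B.filter (fun x => f x = (2:ZMod 4))).card = k := ⟨_, rfl⟩
  obtain ⟨b3, hB3⟩ : ∃ k, (B.filter (fun x => f x = (3:ZMod 4))).card = k := ⟨_, rfl⟩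
  -- a_c + b_c = N + indicators
  have hab : ∀ c : ZMod 4,
      (A.filter (fun x => f x = c)).card + (B.filter (fun x => f x = c)).card
        = N + ((if f (r₁ : ZMod m) = c then 1 else 0) + (if f (r₂ : ZMod m) = c then 1 else 0)) := by
    intro c
    have hcui := Finset.card_union_add_card_inter
      (A.filter (fun x => f x = c)) (B.filter (fun x => f x = c))
    rw [← Finset.filter_union, ← Finset.filter_inter_distrib, hU, hI, hfib c] at hcui
    have hpairc : (({(r₁ : ZMod m), (r₂ : ZMod m)} : Finset (ZMod m)).filter
        (fun x => f x = c)).card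
        = (if f (r₁ : ZMod m) = c then 1 else 0) + (if f (r₂ : ZMod m) = c then 1 else 0) := by
      rw [show ({(r₁ : ZMod m), (r₂ : ZMod m)} : Finset (ZMod m))
          = insert (r₁ : ZMod m) {(r₂ : ZMod m)} from rfl]
      rw [Finset.filter_insert, Finset.filter_singleton]
      by_cases h1 : f (r₁ : ZMod m) = c <;> by_cases h2 : f (r₂ : ZMod m) = c
      · simp only [if_pos h1, if_pos h2]
        rw [Finset.card_pair hne]
      · simp only [if_pos h1, if_neg h2]
        simp
      · simp only [if_neg h1, if_pos h2]
        simp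
      · simp only [if_neg h1, if_neg h2]
        simp
    rw [hpairc] at hcui
    omega
  have hab0 := hab 0; have hab1 := hab 1; have hab2 := hab 2; have hab3 := hab 3
  rw [hA0, hB0] at hab0
  rw [hA1, hB1] at hab1
  rw [hA2, hB2] at hab2
  rw [hA3, hB3] at hab3
  -- the key class equations
  have key : ∀ σ : ZMod 4,
      ((A ×ˢ A).filter (fun p => f (p.1 + p.2) = σ)).card
        + (A.filter (fun x => f (x + x) = σ)).card
      = ((B ×ˢ B).filter (fun p => f (p.1 + p.2) = σ)).card
        + (B.filter (fun x => f (x + x) = σ)).card := by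
    intro σ
    have hFA := lemPD A (fun x => f x) σ
    have hFB := lemPD B (fun x => f x) σ
    have hF : ((A ×ˢ A).filter (fun p => f (p.1 + p.2) = σ ∧ p.1.val ≤ p.2.val)).card
        = ((B ×ˢ B).filter (fun p => f (p.1 + p.2) = σ ∧ p.1.val ≤ p.2.val)).card := by
      rw [lemF A (fun x => f x) σ, lemF B (fun x => f x) σ]
      exact Finset.sum_congr rfl (fun n _ => hcon n)
    omega
  have key0 := key 0
  have key1 := key 1
  have key2 := key 2
  have key3 := key 3
  rw [lemP A f 0, lemP B f 0, lemD A f 0, lemD B f 0] at key0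
  rw [lemP A f 1, lemP B f 1, lemD A f 1, lemD B f 1] at key1
  rw [lemP A f 2, lemP B f 2, lemD A f 2, lemD B f 2] at key2
  rw [lemP A f 3, lemP B f 3, lemD A f 3, lemD B f 3] at key3
  simp only [sum4] at key0 key1 key2 key3
  rw [show (0:ZMod 4) - 0 = 0 from by decide, show (0:ZMod 4) - 1 = 3 from by decide,
    show (0:ZMod 4) - 2 = 2 from by decide, show (0:ZMod 4) - 3 = 1 from by decide,
    if_pos (show (0:ZMod 4) + 0 = 0 from by decide),
    if_neg (show ¬((1:ZMod 4) + 1 = 0) from by decide),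
    if_pos (show (2:ZMod 4) + 2 = 0 from by decide),
    if_neg (show ¬((3:ZMod 4) + 3 = 0) from by decide)] at key0
  rw [show (1:ZMod 4) - 0 = 1 from by decide, show (1:ZMod 4) - 1 = 0 from by decide,
    show (1:ZMod 4) - 2 = 3 from by decide, show (1:ZMod 4) - 3 = 2 from by decide,
    if_neg (show ¬((0:ZMod 4) + 0 = 1) from by decide),
    if_neg (show ¬((1:ZMod 4) + 1 = 1) from by decide),
    if_neg (show ¬((2:ZMod 4) + 2 = 1) from by decide),
    if_neg (show ¬((3:ZMod 4) + 3 = 1) from by decide)] at key1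
  rw [show (2:ZMod 4) - 0 = 2 from by decide, show (2:ZMod 4) - 1 = 1 from by decide,
    show (2:ZMod 4) - 2 = 0 from by decide, show (2:ZMod 4) - 3 = 3 from by decide,
    if_neg (show ¬((0:ZMod 4) + 0 = 2) from by decide),
    if_pos (show (1:ZMod 4) + 1 = 2 from by decide),
    if_neg (show ¬((2:ZMod 4) + 2 = 2) from by decide),
    if_pos (show (3:ZMod 4) + 3 = 2 from by decide)] at key2
  rw [show (3:ZMod 4) - 0 = 3 from by decide, show (3:ZMod 4) - 1 = 2 from by decide,
    show (3:ZMod 4) - 2 = 1 from by decide, show (3:ZMod 4) - 3 = 0 from by decide,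
    if_neg (show ¬((0:ZMod 4) + 0 = 3) from by decide),
    if_neg (show ¬((1:ZMod 4) + 1 = 3) from by decide),
    if_neg (show ¬((2:ZMod 4) + 2 = 3) from by decide),
    if_neg (show ¬((3:ZMod 4) + 3 = 3) from by decide)] at key3
  rw [hA0, hA1, hA2, hA3, hB0, hB1, hB2, hB3] at key0 key1 key2 key3
  -- cast the four key equations to ℤ
  have K0 : (a0 : ℤ) * a0 + a1 * a3 + a2 * a2 + a3 * a1 + (a0 + 0 + a2 + 0)
      = (b0 : ℤ) * b0 + b1 * b3 + b2 * b2 + b3 * b1 + (b0 + 0 + b2 + 0) := by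
    exact_mod_cast congrArg (Nat.cast : ℕ → ℤ) key0
  have K1 : (a0 : ℤ) * a1 + a1 * a0 + a2 * a3 + a3 * a2 + (0 + 0 + 0 + 0)
      = (b0 : ℤ) * b1 + b1 * b0 + b2 * b3 + b3 * b2 + (0 + 0 + 0 + 0) := by
    exact_mod_cast congrArg (Nat.cast : ℕ → ℤ) key1
  have K2 : (a0 : ℤ) * a2 + a1 * a1 + a2 * a0 + a3 * a3 + (0 + a1 + 0 + a3)
      = (b0 : ℤ) * b2 + b1 * b1 + b2 * b0 + b3 * b3 + (0 + b1 + 0 + b3) := by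
    exact_mod_cast congrArg (Nat.cast : ℕ → ℤ) key2
  have K3 : (a0 : ℤ) * a3 + a1 * a2 + a2 * a1 + a3 * a0 + (0 + 0 + 0 + 0)
      = (b0 : ℤ) * b3 + b1 * b2 + b2 * b1 + b3 * b0 + (0 + 0 + 0 + 0) := by
    exact_mod_cast congrArg (Nat.cast : ℕ → ℤ) key3
  -- classes of the two intersection points
  have hδγ : f (r₂ : ZMod m) = f (r₁ : ZMod m) + ((r₂ - r₁ : ℤ) : ZMod 4) := by
    rw [map_intCast, map_intCast]
    push_cast
    ring
  have h4e : ∀ x : ZMod 4, x = 0 ∨ x = 1 ∨ x = 2 ∨ x = 3 := by decide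
  have hd4 : ((r₂ - r₁ : ℤ) : ZMod 4) = 1 ∨ ((r₂ - r₁ : ℤ) : ZMod 4) = 3 := by
    obtain ⟨j, hj⟩ := hodd
    have h2 : ((r₂ - r₁ : ℤ) : ZMod 4) = 2 * ((j : ℤ) : ZMod 4) + 1 := by
      rw [hj]; push_cast; ring
    rcases h4e ((j : ℤ) : ZMod 4) with hx | hx | hx | hx <;> rw [hx] at h2 <;>
      first
        | (left; rw [h2]; decide)
        | (right; rw [h2]; decide)
  obtain ⟨t, ht⟩ := h8m
  rcases h4e (f (r₁ : ZMod m)) with hγ | hγ | hγ | hγ <;> rcases hd4 with hd | hd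
  · -- γ = 0, δ = 1 : use K0 - K3, 4*a0 = 2N+2
    have hδ : f (r₂ : ZMod m) = 1 := by rw [hδγ, hγ, hd]; decide
    rw [hγ, hδ] at hab0 hab1 hab2 hab3
    rw [if_pos rfl, if_neg (by decide : ¬((1:ZMod 4) = 0))] at hab0
    rw [if_neg (by decide : ¬((0:ZMod 4) = 1)), if_pos rfl] at hab1
    rw [if_neg (by decide : ¬((0:ZMod 4) = 2)), if_neg (by decide : ¬((1:ZMod 4) = 2))] at hab2
    rw [if_neg (by decide : ¬((0:ZMod 4) = 3)), if_neg (by decide : ¬((1:ZMod 4) = 3))] at hab3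
    have z0 : (b0 : ℤ) = (N : ℤ) + 1 - a0 := by omega
    have z1 : (b1 : ℤ) = (N : ℤ) + 1 - a1 := by omega
    have z2 : (b2 : ℤ) = (N : ℤ) - a2 := by omega
    have z3 : (b3 : ℤ) = (N : ℤ) - a3 := by omega
    rw [z0, z1, z2, z3] at K0 K3
    have hfin : 4 * (a0 : ℤ) = 2 * (N : ℤ) + 2 := by linear_combination K0 - K3
    omega
  · -- γ = 0, δ = 3 : use K0 - K1, 4*a0 = 2N+2
    have hδ : f (r₂ : ZMod m) = 3 := by rw [hδγ, hγ, hd]; decide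
    rw [hγ, hδ] at hab0 hab1 hab2 hab3
    rw [if_pos rfl, if_neg (by decide : ¬((3:ZMod 4) = 0))] at hab0
    rw [if_neg (by decide : ¬((0:ZMod 4) = 1)), if_neg (by decide : ¬((3:ZMod 4) = 1))] at hab1
    rw [if_neg (by decide : ¬((0:ZMod 4) = 2)), if_neg (by decide : ¬((3:ZMod 4) = 2))] at hab2
    rw [if_neg (by decide : ¬((0:ZMod 4) = 3)), if_pos rfl] at hab3
    have z0 : (b0 : ℤ) = (N : ℤ) + 1 - a0 := by omega
    have z1 : (b1 : ℤ) = (N : ℤ) - a1 := by omega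
    have z2 : (b2 : ℤ) = (N : ℤ) - a2 := by omega
    have z3 : (b3 : ℤ) = (N : ℤ) + 1 - a3 := by omega
    rw [z0, z1, z2, z3] at K0 K1
    have hfin : 4 * (a0 : ℤ) = 2 * (N : ℤ) + 2 := by linear_combination K0 - K1
    omega
  · -- γ = 1, δ = 2 : use K2 - K1, 4*a1 = 2N+2
    have hδ : f (r₂ : ZMod m) = 2 := by rw [hδγ, hγ, hd]; decide
    rw [hγ, hδ] at hab0 hab1 hab2 hab3
    rw [if_neg (by decide : ¬((1:ZMod 4) = 0)), if_neg (by decide : ¬((2:ZMod 4) = 0))] at hab0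
    rw [if_pos rfl, if_neg (by decide : ¬((2:ZMod 4) = 1))] at hab1
    rw [if_neg (by decide : ¬((1:ZMod 4) = 2)), if_pos rfl] at hab2
    rw [if_neg (by decide : ¬((1:ZMod 4) = 3)), if_neg (by decide : ¬((2:ZMod 4) = 3))] at hab3
    have z0 : (b0 : ℤ) = (N : ℤ) - a0 := by omega
    have z1 : (b1 : ℤ) = (N : ℤ) + 1 - a1 := by omega
    have z2 : (b2 : ℤ) = (N : ℤ) + 1 - a2 := by omega
    have z3 : (b3 : ℤ) = (N : ℤ) - a3 := by omega
    rw [z0, z1, z2, z3] at K2 K1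
    have hfin : 4 * (a1 : ℤ) = 2 * (N : ℤ) + 2 := by linear_combination K2 - K1
    omega
  · -- γ = 1, δ = 0 : use K2 - K3, 4*a1 = 2N+2
    have hδ : f (r₂ : ZMod m) = 0 := by rw [hδγ, hγ, hd]; decide
    rw [hγ, hδ] at hab0 hab1 hab2 hab3
    rw [if_neg (by decide : ¬((1:ZMod 4) = 0)), if_pos rfl] at hab0
    rw [if_pos rfl, if_neg (by decide : ¬((0:ZMod 4) = 1))] at hab1
    rw [if_neg (by decide : ¬((1:ZMod 4) = 2)), if_neg (by decide : ¬((0:ZMod 4) = 2))] at hab2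
    rw [if_neg (by decide : ¬((1:ZMod 4) = 3)), if_neg (by decide : ¬((0:ZMod 4) = 3))] at hab3
    have z0 : (b0 : ℤ) = (N : ℤ) + 1 - a0 := by omega
    have z1 : (b1 : ℤ) = (N : ℤ) + 1 - a1 := by omega
    have z2 : (b2 : ℤ) = (N : ℤ) - a2 := by omega
    have z3 : (b3 : ℤ) = (N : ℤ) - a3 := by omega
    rw [z0, z1, z2, z3] at K2 K3
    have hfin : 4 * (a1 : ℤ) = 2 * (N : ℤ) + 2 := by linear_combination K2 - K3
    omega
  · -- γ = 2, δ = 3 : use K0 - K3, 4*a2 = 2N+2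
    have hδ : f (r₂ : ZMod m) = 3 := by rw [hδγ, hγ, hd]; decide
    rw [hγ, hδ] at hab0 hab1 hab2 hab3
    rw [if_neg (by decide : ¬((2:ZMod 4) = 0)), if_neg (by decide : ¬((3:ZMod 4) = 0))] at hab0
    rw [if_neg (by decide : ¬((2:ZMod 4) = 1)), if_neg (by decide : ¬((3:ZMod 4) = 1))] at hab1
    rw [if_pos rfl, if_neg (by decide : ¬((3:ZMod 4) = 2))] at hab2
    rw [if_neg (by decide : ¬((2:ZMod 4) = 3)), if_pos rfl] at hab3
    have z0 : (b0 : ℤ) = (N : ℤ) - a0 := by omega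
    have z1 : (b1 : ℤ) = (N : ℤ) - a1 := by omega
    have z2 : (b2 : ℤ) = (N : ℤ) + 1 - a2 := by omega
    have z3 : (b3 : ℤ) = (N : ℤ) + 1 - a3 := by omega
    rw [z0, z1, z2, z3] at K0 K3
    have hfin : 4 * (a2 : ℤ) = 2 * (N : ℤ) + 2 := by linear_combination K0 - K3
    omega
  · -- γ = 2, δ = 1 : use K0 - K1, 4*a2 = 2N+2
    have hδ : f (r₂ : ZMod m) = 1 := by rw [hδγ, hγ, hd]; decide
    rw [hγ, hδ] at hab0 hab1 hab2 hab3
    rw [if_neg (by decide : ¬((2:ZMod 4) = 0)), if_neg (by decide : ¬((1:ZMod 4) = 0))] at hab0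
    rw [if_neg (by decide : ¬((2:ZMod 4) = 1)), if_pos rfl] at hab1
    rw [if_pos rfl, if_neg (by decide : ¬((1:ZMod 4) = 2))] at hab2
    rw [if_neg (by decide : ¬((2:ZMod 4) = 3)), if_neg (by decide : ¬((1:ZMod 4) = 3))] at hab3
    have z0 : (b0 : ℤ) = (N : ℤ) - a0 := by omega
    have z1 : (b1 : ℤ) = (N : ℤ) + 1 - a1 := by omega
    have z2 : (b2 : ℤ) = (N : ℤ) + 1 - a2 := by omega
    have z3 : (b3 : ℤ) = (N : ℤ) - a3 := by omega
    rw [z0, z1, z2, z3] at K0 K1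
    have hfin : 4 * (a2 : ℤ) = 2 * (N : ℤ) + 2 := by linear_combination K0 - K1
    omega
  · -- γ = 3, δ = 0 : use K2 - K1, 4*a3 = 2N+2
    have hδ : f (r₂ : ZMod m) = 0 := by rw [hδγ, hγ, hd]; decide
    rw [hγ, hδ] at hab0 hab1 hab2 hab3
    rw [if_neg (by decide : ¬((3:ZMod 4) = 0)), if_pos rfl] at hab0
    rw [if_neg (by decide : ¬((3:ZMod 4) = 1)), if_neg (by decide : ¬((0:ZMod 4) = 1))] at hab1
    rw [if_neg (by decide : ¬((3:ZMod 4) = 2)), if_neg (by decide : ¬((0:ZMod 4) = 2))] at hab2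
    rw [if_pos rfl, if_neg (by decide : ¬((0:ZMod 4) = 3))] at hab3
    have z0 : (b0 : ℤ) = (N : ℤ) + 1 - a0 := by omega
    have z1 : (b1 : ℤ) = (N : ℤ) - a1 := by omega
    have z2 : (b2 : ℤ) = (N : ℤ) - a2 := by omega
    have z3 : (b3 : ℤ) = (N : ℤ) + 1 - a3 := by omega
    rw [z0, z1, z2, z3] at K2 K1
    have hfin : 4 * (a3 : ℤ) = 2 * (N : ℤ) + 2 := by linear_combination K2 - K1
    omega
  · -- γ = 3, δ = 2 : use K2 - K3, 4*a3 = 2N+2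
    have hδ : f (r₂ : ZMod m) = 2 := by rw [hδγ, hγ, hd]; decide
    rw [hγ, hδ] at hab0 hab1 hab2 hab3
    rw [if_neg (by decide : ¬((3:ZMod 4) = 0)), if_neg (by decide : ¬((2:ZMod 4) = 0))] at hab0
    rw [if_neg (by decide : ¬((3:ZMod 4) = 1)), if_neg (by decide : ¬((2:ZMod 4) = 1))] at hab1
    rw [if_neg (by decide : ¬((3:ZMod 4) = 2)), if_pos rfl] at hab2
    rw [if_pos rfl, if_neg (by decide : ¬((2:ZMod 4) = 3))] at hab3
    have z0 : (b0 : ℤ) = (N : ℤ) - a0 := by omega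
    have z1 : (b1 : ℤ) = (N : ℤ) - a1 := by omega
    have z2 : (b2 : ℤ) = (N : ℤ) + 1 - a2 := by omega
    have z3 : (b3 : ℤ) = (N : ℤ) + 1 - a3 := by omega
    rw [z0, z1, z2, z3] at K2 K3
    have hfin : 4 * (a3 : ℤ) = 2 * (N : ℤ) + 2 := by linear_combination K2 - K3
    omega
end

section
/- Let m be a positive even integer with 4 ∣ m, and let A, B ⊆ ℤ/mℤ with A ∪ B = ℤ/mℤ and A ∩ B = {r₁, r₂} where r₁ ≠ r₂, 2 ∣ (r₂ − r₁), and r₂ ≢ r₁ + m/2 (mod m). Suppose R_A(n) = R_B(n) for all n ∈ ℤ/mℤ. Then for every integer t with t ≡ r₁ + 1 (mod 2) and every integer q, χ_A(t + q(r₂ − r₁)) + χ_A(t + (q−1)(r₂ − r₁)) = 1. -/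
open Finset

/-- Integer-valued indicator function of a finset. -/
private def ind {m : ℕ} (S : Finset (ZMod m)) (x : ZMod m) : ℤ :=
  if x ∈ S then 1 else 0

private lemma rord_sum {m : ℕ} [NeZero m] (C D : Finset (ZMod m)) (n : ZMod m) :
    (Rord C D n : ℤ) = ∑ x : ZMod m, ind C x * ind D (n - x) := by
  classical
  unfold Rord ind
  rw [Finset.card_filter]
  push_cast
  rw [Finset.sum_product]
  rw [← Finset.sum_filter_add_sum_filter_not Finset.univ (· ∈ C)]
  have h2 : ∑ x ∈ Finset.univ.filter (fun x => ¬ x ∈ C),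
      (if x ∈ C then (1:ℤ) else 0) * (if n - x ∈ D then (1:ℤ) else 0) = 0 := by
    apply Finset.sum_eq_zero
    intro x hx
    simp only [Finset.mem_filter] at hx
    rw [if_neg hx.2, zero_mul]
  rw [h2, add_zero, Finset.filter_mem_eq_inter, Finset.univ_inter]
  apply Finset.sum_congr rfl
  intro c hc
  rw [if_pos hc, one_mul]
  have heq : ∀ d : ZMod m, (c + d = n) ↔ (d = n - c) := by
    intro d; constructor
    · intro h; rw [← h]; ring
    · intro h; rw [h]; ring
  simp only [heq]
  rw [Finset.sum_ite_eq' D (n - c) (fun _ => (1:ℤ))]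

private lemma two_rf {m : ℕ} [NeZero m] (C : Finset (ZMod m)) (n : ZMod m) :
    2 * (Rf C n : ℤ) = (Rord C C n : ℤ)
      + ∑ x : ZMod m, (if x + x = n then ind C x else 0) := by
  classical
  have hrw : ∀ x : ZMod m, (if x + x = n then ind C x else 0)
      = (if x ∈ C ∧ x + x = n then (1:ℤ) else 0) := by
    intro x
    by_cases hs : x + x = n <;> by_cases hc : x ∈ C <;> simp [ind, hs, hc]
  simp only [hrw]
  unfold Rf Rord
  rw [Finset.card_filter, Finset.card_filter]
  push_cast
  rw [Finset.sum_product, Finset.sum_product]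
  have hswap : ∑ x ∈ C, ∑ y ∈ C,
        (if x + y = n ∧ x.val ≤ y.val then (1:ℤ) else 0)
      = ∑ x ∈ C, ∑ y ∈ C, (if x + y = n ∧ y.val ≤ x.val then (1:ℤ) else 0) := by
    rw [Finset.sum_comm]
    apply Finset.sum_congr rfl; intro x _
    apply Finset.sum_congr rfl; intro y _
    have hc : (y + x = n) ↔ (x + y = n) := by rw [add_comm]
    simp only [hc]
  have hdiag : ∑ x : ZMod m, (if x ∈ C ∧ x + x = n then (1:ℤ) else 0)
      = ∑ x ∈ C, ∑ y ∈ C, (if x + y = n ∧ x = y then (1:ℤ) else 0) := by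
    have hdiag0 : (∑ x : ZMod m, if x ∈ C ∧ x + x = n then (1:ℤ) else 0)
        = ∑ x ∈ C, (if x + x = n then (1:ℤ) else 0) := by
      simp only [ite_and]
      rw [Finset.sum_ite_mem, Finset.univ_inter]
    rw [hdiag0]
    apply Finset.sum_congr rfl; intro x hx
    have h1 : ∑ y ∈ C, (if x + y = n ∧ x = y then (1:ℤ) else 0)
        = ∑ y ∈ C, (if y = x then (if x + x = n then (1:ℤ) else 0) else 0) := by
      apply Finset.sum_congr rfl; intro y _
      by_cases hxy : y = x
      · subst hxy; simp
      · have hxy' : ¬ (x = y) := fun h => hxy h.symm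
        simp [hxy, hxy']
    rw [h1, Finset.sum_ite_eq' C x, if_pos hx]
  rw [hdiag, two_mul]
  nth_rewrite 2 [hswap]
  simp only [← Finset.sum_add_distrib]
  apply Finset.sum_congr rfl; intro x _
  apply Finset.sum_congr rfl; intro y _
  by_cases hs : x + y = n
  · by_cases hxy : x = y
    · simp [hs, hxy]
    · have hval : x.val ≠ y.val := fun hv => hxy (ZMod.val_injective m hv)
      simp only [hs, true_and, hxy, and_false, if_false]
      rcases Nat.lt_or_ge x.val y.val with hlt | hge
      · rw [if_pos hlt.le, if_neg (by omega)]; norm_num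
      · rw [if_neg (by omega), if_pos (by omega)]; norm_num
  · simp [hs]

theorem stmt14 (m : ℕ) [NeZero m] (h4 : 4 ∣ m) (A B : Finset (ZMod m))
    (hU : A ∪ B = Finset.univ) (r₁ r₂ : ℤ)
    (hne : (r₁ : ZMod m) ≠ (r₂ : ZMod m))
    (heven : (2 : ℤ) ∣ (r₂ - r₁))
    (hhalf : (r₂ : ZMod m) ≠ (r₁ : ZMod m) + ((m / 2 : ℕ) : ZMod m))
    (hI : A ∩ B = {(r₁ : ZMod m), (r₂ : ZMod m)})
    (h : ∀ n : ZMod m, Rf A n = Rf B n) :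
    ∀ t q : ℤ, t ≡ r₁ + 1 [ZMOD 2] →
      chi A (t + q * (r₂ - r₁)) + chi A (t + (q - 1) * (r₂ - r₁)) = 1 := by
  classical
  have hm2 : (2 : ℕ) ∣ m := dvd_trans ⟨2, rfl⟩ h4
  set φ : ZMod m →+* ZMod 2 := ZMod.castHom hm2 (ZMod 2) with hφdef
  -- indicator sum identity
  have habp : ∀ x : ZMod m, ind A x + ind B x = 1 + (if x ∈ A ∩ B then (1:ℤ) else 0) := by
    intro x
    have hx : x ∈ A ∪ B := hU ▸ Finset.mem_univ x
    rw [Finset.mem_union] at hx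
    by_cases hA : x ∈ A <;> by_cases hB : x ∈ B <;>
      simp [ind, Finset.mem_inter, hA, hB] <;> tauto
  -- the key functional equation
  have key : ∀ n : ZMod m,
      (∑ x : ZMod m, (ind A x - ind B x))
        + (ind A (n - (r₁ : ZMod m)) - ind B (n - (r₁ : ZMod m)))
        + (ind A (n - (r₂ : ZMod m)) - ind B (n - (r₂ : ZMod m)))
        + (∑ x : ZMod m, if x + x = n then ind A x - ind B x else 0) = 0 := by
    intro n
    have hA2 := two_rf A n
    have hB2 := two_rf B n
    have hn : (Rf A n : ℤ) = (Rf B n : ℤ) := by exact_mod_cast congrArg Nat.cast (h n)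
    have hd : (∑ x : ZMod m, if x + x = n then ind A x - ind B x else 0)
        = (∑ x : ZMod m, if x + x = n then ind A x else 0)
          - (∑ x : ZMod m, if x + x = n then ind B x else 0) := by
      rw [← Finset.sum_sub_distrib]
      apply Finset.sum_congr rfl; intro x _
      by_cases hs : x + x = n <;> simp [hs]
    have hord : (Rord A A n : ℤ) - (Rord B B n : ℤ)
        = (∑ x : ZMod m, (ind A x - ind B x))
          + (ind A (n - (r₁ : ZMod m)) - ind B (n - (r₁ : ZMod m)))
          + (ind A (n - (r₂ : ZMod m)) - ind B (n - (r₂ : ZMod m))) := by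
      rw [rord_sum A A n, rord_sum B B n]
      have e1 : (∑ x : ZMod m, ind A x * ind A (n - x))
            - (∑ x : ZMod m, ind B x * ind B (n - x))
          = (∑ x : ZMod m, (ind A x - ind B x) * ind A (n - x))
            + (∑ x : ZMod m, ind B x * (ind A (n - x) - ind B (n - x))) := by
        rw [← Finset.sum_add_distrib, ← Finset.sum_sub_distrib]
        apply Finset.sum_congr rfl; intro x _
        ring
      have e2 : (∑ x : ZMod m, ind B x * (ind A (n - x) - ind B (n - x)))
          = ∑ x : ZMod m, (ind A x - ind B x) * ind B (n - x) := by
        apply Fintype.sum_equiv (Equiv.subLeft n)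
        intro x
        simp only [Equiv.subLeft_apply, sub_sub_cancel]
        ring
      have e3 : (∑ x : ZMod m, (ind A x - ind B x) * ind A (n - x))
            + (∑ x : ZMod m, (ind A x - ind B x) * ind B (n - x))
          = (∑ x : ZMod m, (ind A x - ind B x))
            + ∑ x : ZMod m, (ind A x - ind B x) * (if n - x ∈ A ∩ B then (1:ℤ) else 0) := by
        rw [← Finset.sum_add_distrib, ← Finset.sum_add_distrib]
        apply Finset.sum_congr rfl; intro x _
        rw [← mul_add, habp (n - x), mul_add, mul_one]
      have e4 : (∑ x : ZMod m, (ind A x - ind B x) * (if n - x ∈ A ∩ B then (1:ℤ) else 0))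
          = (ind A (n - (r₁ : ZMod m)) - ind B (n - (r₁ : ZMod m)))
            + (ind A (n - (r₂ : ZMod m)) - ind B (n - (r₂ : ZMod m))) := by
        have hi : ∀ y : ZMod m, (if y ∈ A ∩ B then (1:ℤ) else 0)
            = (if y = (r₁ : ZMod m) then (1:ℤ) else 0)
              + (if y = (r₂ : ZMod m) then (1:ℤ) else 0) := by
          intro y
          rw [hI]
          by_cases h1 : y = (r₁ : ZMod m)
          · subst h1; simp [hne]
          · by_cases h2 : y = (r₂ : ZMod m)
            · simp [h1, h2, Ne.symm hne]
            · simp [h1, h2]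
        simp only [hi, mul_add]
        rw [Finset.sum_add_distrib]
        have hgen : ∀ c : ZMod m,
            (∑ x : ZMod m, (ind A x - ind B x) * (if n - x = c then (1:ℤ) else 0))
            = ind A (n - c) - ind B (n - c) := by
          intro c
          have hcond : ∀ x : ZMod m, (n - x = c) ↔ (x = n - c) := by
            intro x; constructor
            · intro hh; rw [← hh]; ring
            · intro hh; rw [hh]; ring
          simp only [hcond, mul_ite, mul_one, mul_zero]
          rw [Finset.sum_ite_eq' Finset.univ (n - c)
            (fun x => ind A x - ind B x), if_pos (Finset.mem_univ _)]
        rw [hgen (r₁ : ZMod m), hgen (r₂ : ZMod m)]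
      rw [e1, e2, e3, e4]; ring
    rw [hd]
    linarith [hA2, hB2, hn, hord]
  -- total sum vanishes
  have hS : (∑ x : ZMod m, (ind A x - ind B x)) = 0 := by
    have h1 : ∑ n : ZMod m,
        ((∑ x : ZMod m, (ind A x - ind B x))
          + (ind A (n - (r₁ : ZMod m)) - ind B (n - (r₁ : ZMod m)))
          + (ind A (n - (r₂ : ZMod m)) - ind B (n - (r₂ : ZMod m)))
          + (∑ x : ZMod m, if x + x = n then ind A x - ind B x else 0)) = 0 := by
      apply Finset.sum_eq_zero; intro n _; exact key n
    rw [Finset.sum_add_distrib, Finset.sum_add_distrib, Finset.sum_add_distrib] at h1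
    have e1 : ∀ c : ZMod m, (∑ n : ZMod m, (ind A (n - c) - ind B (n - c)))
        = ∑ x : ZMod m, (ind A x - ind B x) := by
      intro c
      exact Fintype.sum_equiv (Equiv.subRight c) _ _ (fun n => rfl)
    have e3 : (∑ n : ZMod m, (∑ x : ZMod m, if x + x = n then ind A x - ind B x else 0))
        = ∑ x : ZMod m, (ind A x - ind B x) := by
      rw [Finset.sum_comm]
      apply Finset.sum_congr rfl; intro x _
      have hc : ∀ n : ZMod m, (if x + x = n then ind A x - ind B x else 0)
          = (if n = x + x then ind A x - ind B x else 0) := by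
        intro n; simp [eq_comm]
      simp only [hc]
      rw [Finset.sum_ite_eq' Finset.univ (x + x)
        (fun _ => ind A x - ind B x), if_pos (Finset.mem_univ _)]
    rw [e1 (r₁ : ZMod m), e1 (r₂ : ZMod m), e3, Finset.sum_const, Finset.card_univ,
      ZMod.card, nsmul_eq_mul] at h1
    have h2 : ((m : ℤ) + 3) * (∑ x : ZMod m, (ind A x - ind B x)) = 0 := by linarith
    rcases mul_eq_zero.mp h2 with h3 | h3
    · exfalso; have : (0:ℤ) ≤ (m:ℤ) := Int.natCast_nonneg m; linarith
    · exact h3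
  -- parity facts
  have hd2 : ((r₂ : ZMod 2) - (r₁ : ZMod 2)) = 0 := by
    have := (ZMod.intCast_zmod_eq_zero_iff_dvd (r₂ - r₁) 2).mpr (by exact_mod_cast heven)
    push_cast at this
    exact this
  have hchar : ∀ z : ZMod 2, z + z = 0 := by decide
  have h10 : (1 : ZMod 2) ≠ 0 := by decide
  intro t q ht
  have ht2 : (t : ZMod 2) = (r₁ : ZMod 2) + 1 := by
    have := (ZMod.intCast_eq_intCast_iff t (r₁ + 1) 2).mpr ht
    push_cast at this
    exact this
  set n : ZMod m := ((t + q * (r₂ - r₁) + r₁ : ℤ) : ZMod m) with hndef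
  have hn1 : n - (r₁ : ZMod m) = ((t + q * (r₂ - r₁) : ℤ) : ZMod m) := by
    rw [hndef]; push_cast; ring
  have hn2 : n - (r₂ : ZMod m) = ((t + (q - 1) * (r₂ - r₁) : ℤ) : ZMod m) := by
    rw [hndef]; push_cast; ring
  -- no diagonal term
  have hD : (∑ x : ZMod m, if x + x = n then ind A x - ind B x else 0) = 0 := by
    apply Finset.sum_eq_zero; intro x _
    rw [if_neg]
    intro hx
    have hx2 : φ x + φ x = φ n := by rw [← map_add, hx]
    rw [hchar (φ x)] at hx2
    have hφn : φ n = 1 := by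
      rw [hndef, map_intCast]
      push_cast
      rw [ht2]
      linear_combination q * hd2 + hchar ((r₁ : ZMod 2))
    rw [← hφn] at h10
    exact h10 hx2.symm
  -- X and Y avoid the intersection
  have hnotI : ∀ u : ℤ, ((u : ZMod 2) = (r₁ : ZMod 2) + 1) → ((u : ZMod m) ∉ A ∩ B) := by
    intro u hu hmem
    rw [hI, Finset.mem_insert, Finset.mem_singleton] at hmem
    have hr21 : (r₂ : ZMod 2) = (r₁ : ZMod 2) := by linear_combination hd2
    have hcontra : (1 : ZMod 2) = 0 := by
      rcases hmem with h' | h'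
      · have h'' := congrArg φ h'
        rw [map_intCast, map_intCast] at h''
        rw [hu] at h''
        linear_combination h''
      · have h'' := congrArg φ h'
        rw [map_intCast, map_intCast] at h''
        rw [hu, hr21] at h''
        linear_combination h''
    exact h10 hcontra
  have hX2 : ((t + q * (r₂ - r₁) : ℤ) : ZMod 2) = (r₁ : ZMod 2) + 1 := by
    push_cast
    rw [ht2]
    linear_combination q * hd2
  have hY2 : ((t + (q - 1) * (r₂ - r₁) : ℤ) : ZMod 2) = (r₁ : ZMod 2) + 1 := by
    push_cast
    rw [ht2]
    linear_combination (q - 1) * hd2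
  have hXI := hnotI _ hX2
  have hYI := hnotI _ hY2
  -- assemble
  have hkey := key n
  rw [hS, hD, hn1, hn2, zero_add, add_zero] at hkey
  have hXab := habp ((t + q * (r₂ - r₁) : ℤ) : ZMod m)
  have hYab := habp ((t + (q - 1) * (r₂ - r₁) : ℤ) : ZMod m)
  rw [if_neg hXI, add_zero] at hXab
  rw [if_neg hYI, add_zero] at hYab
  show ind A ((t + q * (r₂ - r₁) : ℤ) : ZMod m)
      + ind A ((t + (q - 1) * (r₂ - r₁) : ℤ) : ZMod m) = 1
  linarith [hkey, hXab, hYab]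
end
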